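/- arXiv:2104.06389 — 3 statements merged into one kernel-verified Lean document; each statement's English description precedes it below -/
import Mathlib

section
/- Suppose Δ is a p×p real matrix with at most d nonzeros per row, ‖Δ‖_∞ ≤ 1/(3κd), where κ = ‖Σ*‖_∞,op for Σ* = Θ*^{-1}. Then the remainder R(Δ) = (Θ*+Δ)^{-1} - Σ* + Σ*ΔΣ* satisfies the entrywise bound ‖R(Δ)‖_∞ ≤ (3/2) d ‖Δ‖_∞² κ³. -/
/-- The operator norm induced by the `ℓ∞` vector norm: maximum absolute row sum. -/
noncomputable def linftyNorm {p : ℕ} (M : Matrix (Fin p) (Fin p) ℝ) : ℝ :=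
  ⨆ i, ∑ j, |M i j|

/-- The entrywise maximum absolute value of a matrix. -/
noncomputable def entryNorm {p : ℕ} (M : Matrix (Fin p) (Fin p) ℝ) : ℝ :=
  ⨆ i, ⨆ j, |M i j|

open Matrix
namespace Stmt9Aux

variable {p : ℕ}

lemma rowsum_le_linftyNorm (M : Matrix (Fin p) (Fin p) ℝ) (i : Fin p) :
    ∑ j, |M i j| ≤ linftyNorm M :=
  le_ciSup (f := fun i => ∑ j, |M i j|) (Set.Finite.bddAbove (Set.finite_range _)) i

lemma linftyNorm_nonneg [Nonempty (Fin p)] (M : Matrix (Fin p) (Fin p) ℝ) :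
    0 ≤ linftyNorm M := by
  obtain ⟨i⟩ := ‹Nonempty (Fin p)›
  exact le_trans (Finset.sum_nonneg fun j _ => abs_nonneg _) (rowsum_le_linftyNorm M i)

lemma linftyNorm_le [Nonempty (Fin p)] {M : Matrix (Fin p) (Fin p) ℝ} {c : ℝ}
    (h : ∀ i, ∑ j, |M i j| ≤ c) : linftyNorm M ≤ c :=
  ciSup_le h

lemma abs_le_entryNorm (M : Matrix (Fin p) (Fin p) ℝ) (i j : Fin p) :
    |M i j| ≤ entryNorm M :=
  le_trans (le_ciSup (f := fun j => |M i j|) (Set.Finite.bddAbove (Set.finite_range _)) j)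
    (le_ciSup (f := fun i => ⨆ j, |M i j|) (Set.Finite.bddAbove (Set.finite_range _)) i)

lemma entryNorm_nonneg [Nonempty (Fin p)] (M : Matrix (Fin p) (Fin p) ℝ) :
    0 ≤ entryNorm M := by
  obtain ⟨i⟩ := ‹Nonempty (Fin p)›
  exact le_trans (abs_nonneg _) (abs_le_entryNorm M i i)

lemma entryNorm_le [Nonempty (Fin p)] {M : Matrix (Fin p) (Fin p) ℝ} {c : ℝ}
    (h : ∀ i j, |M i j| ≤ c) : entryNorm M ≤ c :=
  ciSup_le fun i => ciSup_le (h i)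

lemma linftyNorm_mul_le [Nonempty (Fin p)] (A B : Matrix (Fin p) (Fin p) ℝ) :
    linftyNorm (A * B) ≤ linftyNorm A * linftyNorm B := by
  apply linftyNorm_le
  intro i
  calc ∑ j, |(A * B) i j| ≤ ∑ j, ∑ k, |A i k| * |B k j| := by
        refine Finset.sum_le_sum fun j _ => ?_
        rw [Matrix.mul_apply]
        exact (Finset.abs_sum_le_sum_abs _ _).trans
          (Finset.sum_le_sum fun k _ => le_of_eq (abs_mul _ _))
    _ = ∑ k, |A i k| * ∑ j, |B k j| := by
        rw [Finset.sum_comm]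
        simp [Finset.mul_sum]
    _ ≤ ∑ k, |A i k| * linftyNorm B :=
        Finset.sum_le_sum fun k _ =>
          mul_le_mul_of_nonneg_left (rowsum_le_linftyNorm B k) (abs_nonneg _)
    _ = (∑ k, |A i k|) * linftyNorm B := by rw [Finset.sum_mul]
    _ ≤ linftyNorm A * linftyNorm B :=
        mul_le_mul_of_nonneg_right (rowsum_le_linftyNorm A i) (linftyNorm_nonneg B)

lemma linftyNorm_sub_le [Nonempty (Fin p)] (A B : Matrix (Fin p) (Fin p) ℝ) :
    linftyNorm (A - B) ≤ linftyNorm A + linftyNorm B := by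
  apply linftyNorm_le
  intro i
  calc ∑ j, |(A - B) i j| ≤ ∑ j, (|A i j| + |B i j|) := by
        refine Finset.sum_le_sum fun j _ => ?_
        have h := abs_add_le (A i j) (-(B i j))
        simpa [sub_eq_add_neg] using h
    _ = (∑ j, |A i j|) + ∑ j, |B i j| := Finset.sum_add_distrib
    _ ≤ linftyNorm A + linftyNorm B :=
        add_le_add (rowsum_le_linftyNorm A i) (rowsum_le_linftyNorm B i)

lemma linftyNorm_one [Nonempty (Fin p)] :
    linftyNorm (1 : Matrix (Fin p) (Fin p) ℝ) = 1 := by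
  have h : ∀ i : Fin p, ∑ j, |(1 : Matrix (Fin p) (Fin p) ℝ) i j| = 1 := by
    intro i
    have : ∀ j, |(1 : Matrix (Fin p) (Fin p) ℝ) i j| = if j = i then (1 : ℝ) else 0 := by
      intro j
      by_cases hij : i = j <;> simp [Matrix.one_apply, hij, eq_comm]
    simp [this]
  have h2 : linftyNorm (1 : Matrix (Fin p) (Fin p) ℝ) = ⨆ _ : Fin p, (1 : ℝ) := by
    unfold linftyNorm
    congr 1
    funext i
    exact h i
  rw [h2, ciSup_const]

section InstNorm

attribute [local instance] Matrix.linftyOpNormedAddCommGroup Matrix.linftyOpNormedRing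
  Matrix.linftyOpNormedAlgebra

lemma instNorm_le {M : Matrix (Fin p) (Fin p) ℝ} {c : ℝ} (hc : 0 ≤ c)
    (h : ∀ i, ∑ j, |M i j| ≤ c) : ‖M‖ ≤ c := by
  rw [Matrix.linfty_opNorm_def]
  rw [← Real.coe_toNNReal c hc, NNReal.coe_le_coe]
  refine Finset.sup_le fun i _ => ?_
  rw [← NNReal.coe_le_coe, Real.coe_toNNReal c hc, NNReal.coe_sum]
  simpa [Real.norm_eq_abs] using h i

lemma isUnit_one_add {M : Matrix (Fin p) (Fin p) ℝ}
    (h : ∀ i, ∑ j, |M i j| ≤ 1/3) : IsUnit (1 + M) := by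
  haveI : CompleteSpace (Matrix (Fin p) (Fin p) ℝ) := FiniteDimensional.complete ℝ _
  have hn : ‖-M‖ < 1 := by
    rw [norm_neg]
    exact lt_of_le_of_lt (instNorm_le (by norm_num) h) (by norm_num)
  have := isUnit_one_sub_of_norm_lt_one hn
  rwa [sub_neg_eq_add] at this

end InstNorm

end Stmt9Aux

open Stmt9Aux

/-- Control of the remainder: if `Δ` is symmetric with at most `d` nonzeros per row and
`‖Δ‖_∞ ≤ 1/(3 κ d)` where `κ = ‖Σ*‖_{∞,op}`, `Σ* = Θ*⁻¹`, then
`‖(Θ*+Δ)⁻¹ - Σ* + Σ*ΔΣ*‖_∞ ≤ (3/2) d ‖Δ‖_∞² κ³`. -/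
theorem stmt9 {p d : ℕ} (Θ Δ : Matrix (Fin p) (Fin p) ℝ) (hΘ : Θ.PosDef) (hΔs : Δ.IsSymm)
    (κ : ℝ) (hκ : κ = linftyNorm Θ⁻¹)
    (hd : ∀ i, (Finset.univ.filter fun j => Δ i j ≠ 0).card ≤ d)
    (hsmall : entryNorm Δ ≤ 1 / (3 * κ * d)) :
    entryNorm ((Θ + Δ)⁻¹ - Θ⁻¹ + Θ⁻¹ * Δ * Θ⁻¹) ≤ 3 / 2 * d * entryNorm Δ ^ 2 * κ ^ 3 := by
  rcases Nat.eq_zero_or_pos p with hp | hp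
  · subst hp
    have h0 : ∀ M : Matrix (Fin 0) (Fin 0) ℝ, entryNorm M = 0 := fun M => by
      simp [entryNorm, Real.iSup_of_isEmpty]
    rw [h0, h0]
    norm_num
  haveI : Nonempty (Fin p) := ⟨⟨0, hp⟩⟩
  by_cases hΔ0 : Δ = 0
  · subst hΔ0
    have h1 : (Θ + 0)⁻¹ - Θ⁻¹ + Θ⁻¹ * 0 * Θ⁻¹ = (0 : Matrix (Fin p) (Fin p) ℝ) := by simp
    rw [h1]
    have hz : entryNorm (0 : Matrix (Fin p) (Fin p) ℝ) = 0 := by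
      simp [entryNorm, ciSup_const]
    rw [hz]
    norm_num
  -- main case
  set e := entryNorm Δ with he
  have he0 : 0 < e := by
    have hex : ∃ i j, Δ i j ≠ 0 := by
      by_contra h
      push_neg at h
      exact hΔ0 (by ext i j; simp [h])
    obtain ⟨i, j, hij⟩ := hex
    exact lt_of_lt_of_le (abs_pos.mpr hij) (abs_le_entryNorm Δ i j)
  have hκ0 : 0 ≤ κ := by rw [hκ]; exact linftyNorm_nonneg _
  have hκd : 0 < 3 * κ * (d : ℝ) := by
    rcases lt_or_ge 0 (3 * κ * (d : ℝ)) with h | h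
    · exact h
    · exfalso
      have := one_div_nonpos.mpr h
      linarith [hsmall.trans this]
  have hκpos : 0 < κ := by
    rcases hκ0.lt_or_eq with h | h
    · exact h
    · exfalso; rw [← h] at hκd; norm_num at hκd
  have hdpos : 0 < (d : ℝ) := by
    rcases (Nat.cast_nonneg d : (0:ℝ) ≤ d).lt_or_eq with h | h
    · exact h
    · exfalso; rw [← h] at hκd; norm_num at hκd
  set S := Θ⁻¹ with hS
  -- basic bounds
  have hSnorm : linftyNorm S = κ := hκ.symm
  have hΔop : linftyNorm Δ ≤ (d : ℝ) * e := by
    apply linftyNorm_le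
    intro i
    have step1 : ∑ j, |Δ i j| = ∑ j ∈ Finset.univ.filter (fun j => Δ i j ≠ 0), |Δ i j| := by
      refine (Finset.sum_filter_of_ne ?_).symm
      intro j _ hj
      exact fun h => hj (by simp [h])
    rw [step1]
    calc ∑ j ∈ Finset.univ.filter (fun j => Δ i j ≠ 0), |Δ i j|
        ≤ (Finset.univ.filter (fun j => Δ i j ≠ 0)).card • e :=
          Finset.sum_le_card_nsmul _ _ _ (fun j _ => abs_le_entryNorm Δ i j)
      _ = ((Finset.univ.filter (fun j => Δ i j ≠ 0)).card : ℝ) * e := by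
          rw [nsmul_eq_mul]
      _ ≤ (d : ℝ) * e := by
          apply mul_le_mul_of_nonneg_right _ he0.le
          exact_mod_cast hd i
  have hSD_entry : ∀ i k, |(S * Δ) i k| ≤ κ * e := by
    intro i k
    rw [Matrix.mul_apply]
    calc |∑ l, S i l * Δ l k| ≤ ∑ l, |S i l| * |Δ l k| :=
          (Finset.abs_sum_le_sum_abs _ _).trans
            (Finset.sum_le_sum fun l _ => le_of_eq (abs_mul _ _))
      _ ≤ ∑ l, |S i l| * e :=
          Finset.sum_le_sum fun l _ =>
            mul_le_mul_of_nonneg_left (abs_le_entryNorm Δ l k) (abs_nonneg _)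
      _ = (∑ l, |S i l|) * e := (Finset.sum_mul _ _ _).symm
      _ ≤ κ * e := by
          apply mul_le_mul_of_nonneg_right _ he0.le
          rw [← hSnorm]
          exact rowsum_le_linftyNorm S i
  have h13 : κ * ((d : ℝ) * e) ≤ 1 / 3 := by
    rw [le_div_iff₀ hκd] at hsmall
    nlinarith
  have hSDnorm : linftyNorm (S * Δ) ≤ 1 / 3 := by
    refine (linftyNorm_mul_le S Δ).trans (le_trans ?_ h13)
    rw [← hSnorm] at h13 ⊢
    exact mul_le_mul_of_nonneg_left hΔop (linftyNorm_nonneg S)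
  have hDSnorm' : linftyNorm (Δ * S) ≤ (d : ℝ) * e * κ := by
    refine (linftyNorm_mul_le Δ S).trans ?_
    rw [hSnorm]
    exact mul_le_mul_of_nonneg_right hΔop hκ0
  have hDSnorm : linftyNorm (Δ * S) ≤ 1 / 3 := by
    refine hDSnorm'.trans ?_
    nlinarith
  -- invertibility and algebraic identity
  have hdetΘ : IsUnit Θ.det := (hΘ.det_pos).ne'.isUnit
  have hΘΘ : Θ * S = 1 := Matrix.mul_nonsing_inv Θ hdetΘ
  have hfactor : Θ + Δ = Θ * (1 + S * Δ) := by
    rw [mul_add, mul_one, ← Matrix.mul_assoc, hΘΘ, one_mul]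
  have hUnit : IsUnit (1 + S * Δ) :=
    isUnit_one_add (fun i => (rowsum_le_linftyNorm _ i).trans hSDnorm)
  set J := (1 + S * Δ)⁻¹ with hJdef
  have hJ : (1 + S * Δ) * J = 1 :=
    Matrix.mul_nonsing_inv _ ((Matrix.isUnit_iff_isUnit_det _).mp hUnit)
  have hinv : (Θ + Δ)⁻¹ = J * S := by
    rw [hfactor, Matrix.mul_inv_rev]
  have hK : S * Δ * J = 1 - J := by
    rw [add_mul, one_mul] at hJ
    exact eq_sub_of_add_eq' hJ
  have E : (Θ + Δ)⁻¹ - S + S * Δ * S = S * Δ * (S * Δ * J * S) := by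
    have e2 : S * Δ * (S * Δ * J * S) = S * Δ * (S * Δ * J) * S := by
      noncomm_ring
    rw [hinv, e2, hK]
    have e3 : S * Δ * (1 - J) * S = (S * Δ - S * Δ * J) * S := by noncomm_ring
    rw [e3, hK]
    noncomm_ring
  -- symmetry
  have hΘsymm : Θᵀ = Θ := by
    have h := hΘ.isHermitian.eq
    rwa [Matrix.conjTranspose_eq_transpose_of_trivial] at h
  have hSsymm : Sᵀ = S := by
    rw [hS, Matrix.transpose_nonsing_inv, hΘsymm]
  have hΔsymm : Δᵀ = Δ := hΔs.eq
  -- transpose of J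
  have hJT : Jᵀ = (1 + Δ * S)⁻¹ := by
    rw [hJdef, Matrix.transpose_nonsing_inv, Matrix.transpose_add,
      Matrix.transpose_one, Matrix.transpose_mul, hSsymm, hΔsymm]
  have hUnit' : IsUnit (1 + Δ * S) :=
    isUnit_one_add (fun i => (rowsum_le_linftyNorm _ i).trans hDSnorm)
  have hJ' : (1 + Δ * S) * Jᵀ = 1 := by
    rw [hJT]
    exact Matrix.mul_nonsing_inv _ ((Matrix.isUnit_iff_isUnit_det _).mp hUnit')
  have hJTid : Jᵀ = 1 - Δ * S * Jᵀ := by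
    rw [add_mul, one_mul] at hJ'
    exact eq_sub_of_add_eq hJ'
  have hJTnorm : linftyNorm Jᵀ ≤ 3 / 2 := by
    have t1 : linftyNorm Jᵀ ≤ linftyNorm (1 : Matrix (Fin p) (Fin p) ℝ)
        + linftyNorm (Δ * S * Jᵀ) := by
      conv_lhs => rw [hJTid]
      exact linftyNorm_sub_le _ _
    have t2 : linftyNorm (Δ * S * Jᵀ) ≤ linftyNorm (Δ * S) * linftyNorm Jᵀ :=
      linftyNorm_mul_le _ _
    have t3 : linftyNorm (Δ * S) * linftyNorm Jᵀ ≤ (1/3) * linftyNorm Jᵀ :=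
      mul_le_mul_of_nonneg_right hDSnorm (linftyNorm_nonneg _)
    rw [linftyNorm_one] at t1
    linarith
  -- column sums of B := S*Δ*J*S
  set B := S * Δ * J * S with hB
  have hBT : Bᵀ = S * (Jᵀ * (Δ * S)) := by
    rw [hB]
    rw [Matrix.transpose_mul, Matrix.transpose_mul, Matrix.transpose_mul,
      hSsymm, hΔsymm]
  have hBTnorm : linftyNorm Bᵀ ≤ κ * (3 / 2 * ((d : ℝ) * e * κ)) := by
    rw [hBT]
    refine (linftyNorm_mul_le _ _).trans ?_
    rw [hSnorm]
    refine mul_le_mul_of_nonneg_left ?_ hκ0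
    refine (linftyNorm_mul_le _ _).trans ?_
    exact mul_le_mul hJTnorm hDSnorm' (linftyNorm_nonneg _) (by norm_num)
  have hcol : ∀ j, ∑ k, |B k j| ≤ κ * (3 / 2 * ((d : ℝ) * e * κ)) := by
    intro j
    have : ∑ k, |B k j| = ∑ k, |Bᵀ j k| := by
      simp [Matrix.transpose_apply]
    rw [this]
    exact (rowsum_le_linftyNorm Bᵀ j).trans hBTnorm
  -- final entrywise bound
  have hfinal : ∀ i j, |((Θ + Δ)⁻¹ - S + S * Δ * S) i j|
      ≤ κ * e * (κ * (3 / 2 * ((d : ℝ) * e * κ))) := by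
    intro i j
    rw [E]
    have hBgoal : S * Δ * (S * Δ * J * S) = (S * Δ) * B := by rw [hB]
    rw [hBgoal, Matrix.mul_apply]
    calc |∑ k, (S * Δ) i k * B k j| ≤ ∑ k, |(S * Δ) i k| * |B k j| :=
          (Finset.abs_sum_le_sum_abs _ _).trans
            (Finset.sum_le_sum fun k _ => le_of_eq (abs_mul _ _))
      _ ≤ ∑ k, κ * e * |B k j| :=
          Finset.sum_le_sum fun k _ =>
            mul_le_mul_of_nonneg_right (hSD_entry i k) (abs_nonneg _)
      _ = κ * e * ∑ k, |B k j| := by rw [Finset.mul_sum]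
      _ ≤ κ * e * (κ * (3 / 2 * ((d : ℝ) * e * κ))) :=
          mul_le_mul_of_nonneg_left (hcol j) (mul_nonneg hκ0 he0.le)
  have hEN : entryNorm ((Θ + Δ)⁻¹ - S + S * Δ * S)
      ≤ κ * e * (κ * (3 / 2 * ((d : ℝ) * e * κ))) := entryNorm_le hfinal
  calc entryNorm ((Θ + Δ)⁻¹ - S + S * Δ * S)
      ≤ κ * e * (κ * (3 / 2 * ((d : ℝ) * e * κ))) := hEN
    _ = 3 / 2 * (d : ℝ) * e ^ 2 * κ ^ 3 := by ring
end

section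
/- Let Θ* be symmetric positive definite with λ_min(Θ*) > 0 and let Δ be symmetric with ‖Δ‖_op ≤ λ_min(Θ*)/2. Then for all v ∈ [0,1], λ_min(∫₀¹ (1-v)(Θ*+vΔ)^{-1} ⊗ (Θ*+vΔ)^{-1} dv) ≥ (1/2) · min_{0≤v≤1} λ_min²((Θ*+vΔ)^{-1}) ≥ (1/2)(λ_max(Θ*) + ‖Δ‖_op)^{-2}. -/
/-!
Eigenvalue bounds are handled through Rayleigh quotients: for Hermitian `A`, `c ≤ λ_min(A)` iff
`c ‖x‖² ≤ xᵀAx` for all `x`. Weyl's bound then puts the spectrum of `Θ* + vΔ` (for `v ∈ [0,1]`)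
within `‖Δ‖_op` of that of `Θ*`, so `Θ* + vΔ` is positive definite with
`λ_max ≤ λ_max(Θ*) + ‖Δ‖_op`, and its inverse has `λ_min ≥ (λ_max(Θ*) + ‖Δ‖_op)⁻¹`.
For the integral, `λ_min(A ⊗ A) ≥ λ_min(A)²` because `A ⊗ A - a²I = (A - aI) ⊗ A + aI ⊗ (A - aI)`
is a sum of Kronecker products of positive semidefinite matrices; integrating the resulting
pointwise bound on the quadratic form against `1 - v` contributes the factor `∫₀¹ (1 - v) dv = 1/2`.
-/

open scoped Kronecker

/-- The spectral (L2 operator) norm of a real square matrix. -/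
noncomputable def opNorm {p : ℕ} (M : Matrix (Fin p) (Fin p) ℝ) : ℝ :=
  ‖Matrix.toEuclideanCLM (𝕜 := ℝ) M‖

open scoped Pointwise
open MeasureTheory

namespace Matrix

section Topology

variable {X n m R : Type*} [TopologicalSpace X] {s : Set X}

theorem _root_.ContinuousOn.matrix_kronecker [Mul R] [TopologicalSpace R] [ContinuousMul R]
    {A : X → Matrix n n R} {B : X → Matrix m m R} (hA : ContinuousOn A s)
    (hB : ContinuousOn B s) : ContinuousOn (fun x => A x ⊗ₖ B x) s :=
  continuousOn_pi.2 fun _ => continuousOn_pi.2 fun _ =>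
    ((continuous_apply_apply _ _).comp_continuousOn hA).mul
      ((continuous_apply_apply _ _).comp_continuousOn hB)

theorem _root_.ContinuousOn.matrix_inv [Fintype n] [DecidableEq n] [NormedField R]
    [CompleteSpace R] {A : X → Matrix n n R} (hA : ContinuousOn A s)
    (hdet : ∀ x ∈ s, IsUnit (A x).det) : ContinuousOn (fun x => (A x)⁻¹) s := fun x hx =>
  (continuousAt_matrix_inv _ (NormedRing.inverse_continuousAt (hdet x hx).unit)
    ).comp_continuousWithinAt (hA x hx)

end Topology

variable {n m : Type*} [Fintype n] [Fintype m]

section Rayleigh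

variable [DecidableEq n] {A : Matrix n n ℝ}

theorem IsHermitian.posSemidef_sub_smul_one_iff (hA : A.IsHermitian) (c : ℝ) :
    (A - c • 1).PosSemidef ↔ ∀ i, c ≤ hA.eigenvalues i := by
  have hc : (A - c • 1).IsHermitian := hA.sub (by simp [IsHermitian])
  have hspec : Set.range hc.eigenvalues = Set.range hA.eigenvalues - {c} := by
    rw [← hc.spectrum_real_eq_range_eigenvalues, ← hA.spectrum_real_eq_range_eigenvalues,
      spectrum.sub_singleton_eq, Algebra.algebraMap_eq_smul_one]
  rw [hc.posSemidef_iff_eigenvalues_nonneg, Pi.le_def]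
  simp only [Pi.zero_apply]
  rw [← Set.forall_mem_range (p := (0 ≤ ·)), hspec]
  simp

theorem IsHermitian.posSemidef_smul_one_sub_iff (hA : A.IsHermitian) (c : ℝ) :
    (c • 1 - A).PosSemidef ↔ ∀ i, hA.eigenvalues i ≤ c := by
  have hc : (c • 1 - A).IsHermitian := IsHermitian.sub (by simp [IsHermitian]) hA
  have hspec : Set.range hc.eigenvalues = {c} - Set.range hA.eigenvalues := by
    rw [← hc.spectrum_real_eq_range_eigenvalues, ← hA.spectrum_real_eq_range_eigenvalues,
      spectrum.singleton_sub_eq, Algebra.algebraMap_eq_smul_one]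
  rw [hc.posSemidef_iff_eigenvalues_nonneg, Pi.le_def]
  simp only [Pi.zero_apply]
  rw [← Set.forall_mem_range (p := (0 ≤ ·)), hspec]
  simp

theorem IsHermitian.le_eigenvalues_iff (hA : A.IsHermitian) (c : ℝ) :
    (∀ i, c ≤ hA.eigenvalues i) ↔ ∀ x, c * (x ⬝ᵥ x) ≤ x ⬝ᵥ (A *ᵥ x) := by
  rw [← hA.posSemidef_sub_smul_one_iff, posSemidef_iff_dotProduct_mulVec,
    and_iff_right (hA.sub (by simp [IsHermitian]))]
  simp [sub_mulVec, dotProduct_sub, smul_mulVec]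

theorem IsHermitian.eigenvalues_le_iff (hA : A.IsHermitian) (c : ℝ) :
    (∀ i, hA.eigenvalues i ≤ c) ↔ ∀ x, x ⬝ᵥ (A *ᵥ x) ≤ c * (x ⬝ᵥ x) := by
  rw [← hA.posSemidef_smul_one_sub_iff, posSemidef_iff_dotProduct_mulVec,
    and_iff_right (IsHermitian.sub (by simp [IsHermitian]) hA)]
  simp [sub_mulVec, dotProduct_sub, smul_mulVec]

end Rayleigh

theorem abs_dotProduct_mulVec_le [DecidableEq n] (M : Matrix n n ℝ) (x : n → ℝ) :
    |x ⬝ᵥ (M *ᵥ x)| ≤ ‖toEuclideanCLM (𝕜 := ℝ) M‖ * (x ⬝ᵥ x) := by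
  set y := WithLp.toLp 2 x
  have hquad : x ⬝ᵥ (M *ᵥ x) = inner ℝ y (toEuclideanCLM (𝕜 := ℝ) M y) := by
    simp [y, toEuclideanCLM_toLp, EuclideanSpace.inner_toLp_toLp, dotProduct_comm]
  have hnorm : x ⬝ᵥ x = ‖y‖ ^ 2 := by
    rw [← real_inner_self_eq_norm_sq, EuclideanSpace.inner_eq_star_dotProduct]
    simp [y]
  rw [hquad, hnorm]
  calc |inner ℝ y (toEuclideanCLM (𝕜 := ℝ) M y)|
      ≤ ‖y‖ * ‖toEuclideanCLM (𝕜 := ℝ) M y‖ := abs_real_inner_le_norm _ _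
    _ ≤ ‖y‖ * (‖toEuclideanCLM (𝕜 := ℝ) M‖ * ‖y‖) := by
      gcongr; exact ContinuousLinearMap.le_opNorm _ _
    _ = ‖toEuclideanCLM (𝕜 := ℝ) M‖ * ‖y‖ ^ 2 := by ring

section Weyl

variable [DecidableEq n] {Θ Δ : Matrix n n ℝ}

theorem IsHermitian.iInf_eigenvalues_sub_le_eigenvalues_add (hΘ : Θ.IsHermitian)
    (hS : (Θ + Δ).IsHermitian) (i : n) :
    (⨅ j, hΘ.eigenvalues j) - ‖toEuclideanCLM (𝕜 := ℝ) Δ‖ ≤ hS.eigenvalues i := by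
  revert i
  refine (hS.le_eigenvalues_iff _).2 fun x => ?_
  have hΘx := (hΘ.le_eigenvalues_iff _).1 (fun j => ciInf_le (Set.finite_range _).bddBelow j) x
  have hΔx := abs_le.1 (abs_dotProduct_mulVec_le Δ x)
  rw [add_mulVec, dotProduct_add, sub_mul]
  linarith [hΔx.1]

theorem IsHermitian.eigenvalues_add_le_iSup_eigenvalues_add (hΘ : Θ.IsHermitian)
    (hS : (Θ + Δ).IsHermitian) (i : n) :
    hS.eigenvalues i ≤ (⨆ j, hΘ.eigenvalues j) + ‖toEuclideanCLM (𝕜 := ℝ) Δ‖ := by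
  revert i
  refine (hS.eigenvalues_le_iff _).2 fun x => ?_
  have hΘx := (hΘ.eigenvalues_le_iff _).1 (fun j => le_ciSup (Set.finite_range _).bddAbove j) x
  have hΔx := abs_le.1 (abs_dotProduct_mulVec_le Δ x)
  rw [add_mulVec, dotProduct_add, add_mul]
  linarith [hΔx.2]

theorem IsHermitian.posDef_add_of_norm_lt (hΘ : Θ.IsHermitian) (hS : (Θ + Δ).IsHermitian)
    (hΔ : ‖toEuclideanCLM (𝕜 := ℝ) Δ‖ < ⨅ j, hΘ.eigenvalues j) : (Θ + Δ).PosDef :=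
  hS.posDef_iff_eigenvalues_pos.2 fun i =>
    (sub_pos.2 hΔ).trans_le (hΘ.iInf_eigenvalues_sub_le_eigenvalues_add hS i)

end Weyl

theorem IsHermitian.inv_eigenvalues_inv_mem_range [DecidableEq n] {A : Matrix n n ℝ}
    (hA : A.IsHermitian) (hdet : IsUnit A.det) (hA' : A⁻¹.IsHermitian) (i : n) :
    (hA'.eigenvalues i)⁻¹ ∈ Set.range hA.eigenvalues := by
  set u := nonsingInvUnit A hdet
  have hmem : hA'.eigenvalues i ∈ spectrum ℝ (↑u⁻¹ : Matrix n n ℝ) :=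
    hA'.eigenvalues_mem_spectrum_real i
  have hne : hA'.eigenvalues i ≠ 0 := spectrum.ne_zero_of_mem_of_unit hmem
  rw [← hA.spectrum_real_eq_range_eigenvalues]
  have := (spectrum.inv_mem_iff (r := Units.mk0 _ hne) (a := u⁻¹)).1 hmem
  simp only [inv_inv, Units.val_inv_eq_inv_val, Units.val_mk0] at this
  exact this

theorem PosDef.inv_le_eigenvalues_inv [DecidableEq n] {A : Matrix n n ℝ} (hA : A.PosDef)
    (hA' : A⁻¹.IsHermitian) {c : ℝ} (hc : ∀ i, hA.isHermitian.eigenvalues i ≤ c) (i : n) :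
    c⁻¹ ≤ hA'.eigenvalues i := by
  obtain ⟨j, hj⟩ := hA.isHermitian.inv_eigenvalues_inv_mem_range hA.det_pos.ne'.isUnit hA' i
  rw [← inv_inv (hA'.eigenvalues i), ← hj]
  exact inv_anti₀ (hA.eigenvalues_pos j) (hc j)

theorem IsHermitian.inv_iSup_eigenvalues_add_le_eigenvalues_inv [DecidableEq n]
    {Θ Δ : Matrix n n ℝ} (hΘ : Θ.IsHermitian) (hS : (Θ + Δ).PosDef)
    (hS' : (Θ + Δ)⁻¹.IsHermitian) {d : ℝ} (hd : ‖toEuclideanCLM (𝕜 := ℝ) Δ‖ ≤ d) (i : n) :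
    ((⨆ j, hΘ.eigenvalues j) + d)⁻¹ ≤ hS'.eigenvalues i :=
  hS.inv_le_eigenvalues_inv hS' (fun j => by
    linarith [hΘ.eigenvalues_add_le_iSup_eigenvalues_add hS.isHermitian j]) i

theorem PosDef.iInf_eigenvalues_pos [DecidableEq n] [Nonempty n] {A : Matrix n n ℝ}
    (hA : A.PosDef) : 0 < ⨅ i, hA.isHermitian.eigenvalues i := by
  obtain ⟨i, hi⟩ := exists_eq_ciInf_of_finite (f := hA.isHermitian.eigenvalues)
  exact hi ▸ hA.eigenvalues_pos i

section Kronecker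

variable [DecidableEq n] [DecidableEq m]

theorem PosSemidef.kronecker_sub_smul_one {A : Matrix n n ℝ} {B : Matrix m m ℝ} {a b : ℝ}
    (ha : 0 ≤ a) (hb : 0 ≤ b) (hA : (A - a • 1).PosSemidef) (hB : (B - b • 1).PosSemidef) :
    (A ⊗ₖ B - (a * b) • 1).PosSemidef := by
  obtain ⟨P, hP, rfl⟩ : ∃ P, P.PosSemidef ∧ A = P + a • 1 := ⟨_, hA, by abel⟩
  obtain ⟨Q, hQ, rfl⟩ : ∃ Q, Q.PosSemidef ∧ B = Q + b • 1 := ⟨_, hB, by abel⟩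
  have hdecomp : (P + a • 1) ⊗ₖ (Q + b • 1) - (a * b) • 1
      = P ⊗ₖ (Q + b • 1) + (a • 1 : Matrix n n ℝ) ⊗ₖ Q := by
    simp only [add_kronecker, kronecker_add, smul_kronecker, kronecker_smul, one_kronecker_one]
    module
  rw [hdecomp]
  exact (hP.kronecker (hQ.add (PosSemidef.one.smul hb))).add
    ((PosSemidef.one.smul ha).kronecker hQ)

theorem IsHermitian.mul_le_eigenvalues_kronecker {A : Matrix n n ℝ} {B : Matrix m m ℝ}
    (hA : A.IsHermitian) (hB : B.IsHermitian) (hAB : (A ⊗ₖ B).IsHermitian) {a b : ℝ}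
    (ha : 0 ≤ a) (hb : 0 ≤ b) (hAa : ∀ i, a ≤ hA.eigenvalues i) (hBb : ∀ j, b ≤ hB.eigenvalues j)
    (k : n × m) : a * b ≤ hAB.eigenvalues k :=
  (hAB.posSemidef_sub_smul_one_iff _).1 (PosSemidef.kronecker_sub_smul_one ha hb
    ((hA.posSemidef_sub_smul_one_iff a).2 hAa) ((hB.posSemidef_sub_smul_one_iff b).2 hBb)) k

theorem IsHermitian.sq_iInf_eigenvalues_mul_le_dotProduct_kronecker {A : Matrix n n ℝ}
    (hA : A.IsHermitian) (h0 : 0 ≤ ⨅ i, hA.eigenvalues i) (x : n × n → ℝ) :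
    (⨅ i, hA.eigenvalues i) ^ 2 * (x ⬝ᵥ x) ≤ x ⬝ᵥ ((A ⊗ₖ A) *ᵥ x) := by
  have hAA : (A ⊗ₖ A).IsHermitian := by
    rw [IsHermitian, conjTranspose_kronecker, hA.eq]
  have hmin (i : n) : (⨅ i, hA.eigenvalues i) ≤ hA.eigenvalues i :=
    ciInf_le (Set.finite_range _).bddBelow i
  refine (hAA.le_eigenvalues_iff _).1 (fun k => ?_) x
  rw [sq]
  exact hA.mul_le_eigenvalues_kronecker hA hAA h0 h0 hmin hmin k

end Kronecker

section Integral

variable {F : ℝ → Matrix n n ℝ}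

theorem dotProduct_mulVec_intervalIntegral {a b : ℝ}
    (hF : ∀ i j, IntervalIntegrable (fun v => F v i j) volume a b) (x : n → ℝ) :
    x ⬝ᵥ (of (fun i j => ∫ v in a..b, F v i j) *ᵥ x) = ∫ v in a..b, x ⬝ᵥ (F v *ᵥ x) := by
  have hexpand (M : Matrix n n ℝ) :
      x ⬝ᵥ (M *ᵥ x) = ∑ ij : n × n, x ij.1 * M ij.1 ij.2 * x ij.2 := by
    simp [dotProduct, mulVec, Finset.mul_sum, Fintype.sum_prod_type, mul_assoc]
  simp_rw [hexpand]
  rw [intervalIntegral.integral_finsetSum fun ij _ => ((hF ij.1 ij.2).const_mul _).mul_const _]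
  simp [intervalIntegral.integral_const_mul, intervalIntegral.integral_mul_const]

theorem half_mul_le_dotProduct_mulVec_integral_one_sub_mul
    (hF : ContinuousOn F (Set.Icc 0 1)) {c : ℝ}
    (hc : ∀ v ∈ Set.Icc (0 : ℝ) 1, ∀ x, c * (x ⬝ᵥ x) ≤ x ⬝ᵥ (F v *ᵥ x)) (x : n → ℝ) :
    1 / 2 * c * (x ⬝ᵥ x) ≤ x ⬝ᵥ (of (fun i j => ∫ v in (0 : ℝ)..1, (1 - v) * F v i j) *ᵥ x) := by
  have hG : ContinuousOn (fun v => (1 - v) • F v) (Set.Icc 0 1) :=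
    (continuous_const.sub continuous_id).continuousOn.smul hF
  have hentries : ∀ i j, IntervalIntegrable (fun v => ((1 - v) • F v) i j) volume 0 1 :=
    fun i j => ((continuous_apply_apply i j).comp_continuousOn hG).intervalIntegrable_of_Icc
      zero_le_one
  have hquad : ContinuousOn (fun v => x ⬝ᵥ (((1 - v) • F v) *ᵥ x)) (Set.Icc 0 1) :=
    (continuous_const.dotProduct (continuous_id.matrix_mulVec continuous_const)
      ).comp_continuousOn hG
  calc 1 / 2 * c * (x ⬝ᵥ x) = ∫ v in (0 : ℝ)..1, (1 - v) * (c * (x ⬝ᵥ x)) := by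
        rw [intervalIntegral.integral_mul_const,
          intervalIntegral.integral_comp_sub_left (fun v => v)]
        norm_num [integral_id]
        ring
    _ ≤ ∫ v in (0 : ℝ)..1, x ⬝ᵥ (((1 - v) • F v) *ᵥ x) := by
        refine intervalIntegral.integral_mono_on zero_le_one
          ((by fun_prop : Continuous _).intervalIntegrable 0 1)
          (hquad.intervalIntegrable_of_Icc zero_le_one) fun v hv => ?_
        rw [smul_mulVec, dotProduct_smul, smul_eq_mul]
        exact mul_le_mul_of_nonneg_left (hc v hv x) (sub_nonneg.2 hv.2)
    _ = _ := (dotProduct_mulVec_intervalIntegral hentries x).symm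

theorem le_eigenvalues_integral_one_sub_mul_kronecker [DecidableEq n] {A : ℝ → Matrix n n ℝ}
    (hA : ∀ v, (A v).IsHermitian) (hcont : ContinuousOn A (Set.Icc 0 1))
    (hnonneg : ∀ v ∈ Set.Icc (0 : ℝ) 1, 0 ≤ ⨅ i, (hA v).eigenvalues i)
    (hK : (of fun a b : n × n => ∫ v in (0 : ℝ)..1, (1 - v) * (A v ⊗ₖ A v) a b).IsHermitian)
    (k : n × n) :
    1 / 2 * ⨅ v : Set.Icc (0 : ℝ) 1, (⨅ i, (hA v).eigenvalues i) ^ 2 ≤ hK.eigenvalues k := by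
  have hbdd : BddBelow (Set.range fun v : Set.Icc (0 : ℝ) 1 => (⨅ i, (hA v).eigenvalues i) ^ 2) :=
    ⟨0, by rintro _ ⟨v, rfl⟩; exact sq_nonneg _⟩
  refine (hK.le_eigenvalues_iff _).2
    (half_mul_le_dotProduct_mulVec_integral_one_sub_mul (hcont.matrix_kronecker hcont)
      fun v hv x => ?_) k
  exact (mul_le_mul_of_nonneg_right (ciInf_le hbdd ⟨v, hv⟩) (dotProduct_self_star_nonneg x)).trans
    ((hA v).sq_iInf_eigenvalues_mul_le_dotProduct_kronecker (hnonneg v hv) x)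

end Integral

end Matrix

open Matrix

/-- Lower bound on the smallest eigenvalue of the integral
`K = ∫₀¹ (1-v)(Θ*+vΔ)⁻¹ ⊗ (Θ*+vΔ)⁻¹ dv` (formed entrywise):
`λ_min(K) ≥ (1/2) min_{v∈[0,1]} λ_min²((Θ*+vΔ)⁻¹) ≥ (1/2)(λ_max(Θ*) + ‖Δ‖_op)⁻²`. -/
theorem stmt15 {p : ℕ} (Θ Δ : Matrix (Fin p) (Fin p) ℝ) (hΘ : Θ.PosDef) (hΔ : Δ.IsSymm)
    (hsmall : opNorm Δ ≤ (⨅ i, hΘ.isHermitian.eigenvalues i) / 2)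
    (hinv : ∀ v : ℝ, ((Θ + v • Δ)⁻¹).IsHermitian)
    (hK : (Matrix.of fun a b : Fin p × Fin p =>
        ∫ v in (0 : ℝ)..1, (1 - v) * ((Θ + v • Δ)⁻¹ ⊗ₖ (Θ + v • Δ)⁻¹) a b).IsHermitian) :
    (1 / 2) * (((⨆ i, hΘ.isHermitian.eigenvalues i) + opNorm Δ) ^ 2)⁻¹
        ≤ (1 / 2) * ⨅ v : Set.Icc (0 : ℝ) 1, (⨅ i, (hinv ↑v).eigenvalues i) ^ 2 ∧
      (1 / 2) * (⨅ v : Set.Icc (0 : ℝ) 1, (⨅ i, (hinv ↑v).eigenvalues i) ^ 2)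
        ≤ ⨅ i, hK.eigenvalues i := by
  obtain hp | hp := isEmpty_or_nonempty (Fin p)
  · -- every infimum and supremum over the empty index type is the junk value `0`
    have hd : opNorm Δ = 0 := le_antisymm (by simpa using hsmall) (norm_nonneg _)
    simp [hd]
  set L := (⨆ i, hΘ.isHermitian.eigenvalues i) + opNorm Δ
  have hlam := hΘ.iInf_eigenvalues_pos
  have hL : 0 < L := add_pos_of_pos_of_nonneg (hlam.trans_le (ciInf_le_ciSup
    (Set.finite_range _).bddBelow (Set.finite_range _).bddAbove)) (norm_nonneg _)
  have hnorm : ∀ v ∈ Set.Icc (0 : ℝ) 1, ‖toEuclideanCLM (𝕜 := ℝ) (v • Δ)‖ ≤ opNorm Δ := by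
    intro v hv
    rw [map_smul, norm_smul, Real.norm_of_nonneg hv.1]
    exact mul_le_of_le_one_left (norm_nonneg _) hv.2
  have hS (v : ℝ) : (Θ + v • Δ).IsHermitian :=
    hΘ.isHermitian.add ((isHermitian_iff_isSymm.2 hΔ).smul (IsSelfAdjoint.all v))
  have hpd : ∀ v ∈ Set.Icc (0 : ℝ) 1, (Θ + v • Δ).PosDef := fun v hv =>
    hΘ.isHermitian.posDef_add_of_norm_lt (hS v) (by linarith [hnorm v hv])
  have hinv_ge : ∀ v ∈ Set.Icc (0 : ℝ) 1, L⁻¹ ≤ ⨅ i, (hinv v).eigenvalues i := fun v hv =>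
    le_ciInf (hΘ.isHermitian.inv_iSup_eigenvalues_add_le_eigenvalues_inv (hpd v hv) (hinv v)
      (hnorm v hv))
  refine ⟨?_, le_ciInf (le_eigenvalues_integral_one_sub_mul_kronecker hinv ?_
    (fun v hv => (inv_nonneg.2 hL.le).trans (hinv_ge v hv)) hK)⟩
  · gcongr
    refine le_ciInf fun v => ?_
    rw [← inv_pow]
    exact pow_le_pow_left₀ (inv_nonneg.2 hL.le) (hinv_ge v v.2) 2
  · exact ContinuousOn.matrix_inv (by fun_prop) fun v hv => (hpd v hv).det_pos.ne'.isUnit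
end

section
/- Let β̂ ∈ ℝ^p be an estimate of β* with ‖β̂ - β*‖_∞ ≤ c₂·r. Suppose every nonzero coordinate of β* satisfies |β*_k| > c₁·r with c₁ > 2c₂. Then the thresholded estimator β̃_k = β̂_k·1{|β̂_k| > c₂ r} satisfies sign(β̃_k) = sign(β*_k) for all k; in particular supp(β̃) = supp(β*). -/
lemma sign_key (a b e : ℝ) (he : 0 < e) (herr : |a - b| ≤ e) (hb : b ≠ 0)
    (hmin : 2 * e < |b|) : Real.sign (if e < |a| then a else 0) = Real.sign b := by
  have h1 : |b| - e ≤ |a| := by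
    have := abs_sub_abs_le_abs_sub b a
    rw [abs_sub_comm] at this
    linarith
  have hgt : e < |a| := by linarith
  rw [if_pos hgt]
  rcases lt_or_gt_of_ne hb with hneg | hpos
  · have ha : a < 0 := by
      have : a - b ≤ e := (abs_le.mp herr).2
      have : |b| = -b := abs_of_neg hneg
      nlinarith
    rw [Real.sign_of_neg ha, Real.sign_of_neg hneg]
  · have ha : 0 < a := by
      have : -(e) ≤ a - b := (abs_le.mp herr).1
      have : |b| = b := abs_of_pos hpos
      nlinarith
    rw [Real.sign_of_pos ha, Real.sign_of_pos hpos]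

/-- Sign consistency of the thresholded vector estimator: if `‖β̂ - β*‖_∞ ≤ c₂ r` and each
nonzero coordinate of `β*` exceeds `c₁ r` with `c₁ > 2 c₂`, then thresholding `β̂` at level
`c₂ r` recovers signs and support of `β*`. -/
theorem stmt17 {p : ℕ} (β βhat : Fin p → ℝ) (r c₁ c₂ : ℝ) (hr : 0 < r)
    (hc₂ : 0 < c₂) (hc : 2 * c₂ < c₁)
    (herr : ∀ k, |βhat k - β k| ≤ c₂ * r)
    (hmin : ∀ k, β k ≠ 0 → c₁ * r < |β k|) :
    (∀ k, Real.sign (if c₂ * r < |βhat k| then βhat k else 0) = Real.sign (β k)) ∧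
      {k | (if c₂ * r < |βhat k| then βhat k else 0) ≠ 0} = {k | β k ≠ 0} := by
  have he : 0 < c₂ * r := mul_pos hc₂ hr
  have key : ∀ k, Real.sign (if c₂ * r < |βhat k| then βhat k else 0) = Real.sign (β k) := by
    intro k
    by_cases hb : β k = 0
    · have : |βhat k| ≤ c₂ * r := by
        have := herr k; rw [hb] at this; simpa using this
      rw [if_neg (not_lt.mpr this), hb, Real.sign_zero]
    · exact sign_key _ _ _ he (herr k) hb (by nlinarith [hmin k hb])
  refine ⟨key, ?_⟩
  ext k
  simp only [Set.mem_setOf_eq]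
  constructor
  · intro h hb
    have := key k
    rw [hb, Real.sign_zero] at this
    exact h (Real.sign_eq_zero_iff.mp this)
  · intro hb h
    have := key k
    rw [h, Real.sign_zero] at this
    exact hb (Real.sign_eq_zero_iff.mp this.symm)
end
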